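/- Let (X,d,μ) be a metric measure space, u ∈ L¹_loc(X,μ), and x a Lebesgue point of u. Define ε_x(r) := sup_{y ∈ B_r(x)} |δ_r(x,y)|, where δ_r(x,y) := 1 − μ(B_r(x))/μ(B_r(y)). If ε_x(r) = O(r²) as r ↓ 0, then |Δ_{μ,r}u(x) − Δ̃_{μ,r}u(x)| → 0 as r ↓ 0. In particular, Δ_{μ,r}u(x) converges as r ↓ 0 if and only if Δ̃_{μ,r}u(x) does, and in that case the two limits coincide. -/

import Mathlib

open MeasureTheory Filter Metric Set
open scoped ENNReal Topology

/-- The AMV `r`-operator at a Lebesgue point `x` with Lebesgue value `c`. -/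
noncomputable def amvOp {X : Type*} [MetricSpace X] [MeasurableSpace X]
    (μ : Measure X) (u : X → ℝ) (c : ℝ) (x : X) (r : ℝ) : ℝ :=
  (1 / r ^ 2) * ⨍ y in ball x r, (u y - c) ∂μ

/-- The SAMV `r`-operator at a Lebesgue point `x` with Lebesgue value `c`. -/
noncomputable def samvOp {X : Type*} [MetricSpace X] [MeasurableSpace X]
    (μ : Measure X) (u : X → ℝ) (c : ℝ) (x : X) (r : ℝ) : ℝ :=
  (1 / (2 * r ^ 2)) *
    ⨍ y in ball x r, (u y - c) * (1 + (μ (ball x r)).toReal / (μ (ball y r)).toReal) ∂μ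

/-! Writing `q(y) = μ(B_r x) / μ(B_r y)`, the SAMV integrand is
`(u - c)(1 + q) = 2(u - c) - (u - c) δ_r(x, ·)`, so
`Δ_{μ,r} u(x) - Δ̃_{μ,r} u(x) = (2r²)⁻¹ ⨍_{B_r x} (u - c) δ_r(x, ·)`.
A uniform bound `|δ_r(x, ·)| ≤ K r²` on `B_r x` bounds this by `(K/2) ⨍_{B_r x} |u - c|`, which
tends to `0` at a Lebesgue point. The measurability of `y ↦ μ(B_r y)` needed for the integrals
comes from its lower semicontinuity. -/

theorem abs_setAverage_mul_le {α : Type*} [MeasurableSpace α] {μ : Measure α} {s : Set α}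
    (hs : MeasurableSet s) {f g : α → ℝ} {C : ℝ} (hf : IntegrableOn f s μ)
    (hg : ∀ y ∈ s, |g y| ≤ C) :
    |⨍ y in s, f y * g y ∂μ| ≤ C * ⨍ y in s, |f y| ∂μ := by
  have hint : |∫ y in s, f y * g y ∂μ| ≤ ∫ y in s, C * |f y| ∂μ := by
    refine norm_integral_le_of_norm_le (f := fun y => f y * g y) (hf.norm.const_mul C) ?_
    filter_upwards [ae_restrict_mem hs] with y hy
    rw [Real.norm_eq_abs, abs_mul, mul_comm C]
    exact mul_le_mul_of_nonneg_left (hg y hy) (abs_nonneg _)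
  rw [integral_const_mul] at hint
  simp only [setAverage_eq, smul_eq_mul, abs_mul, abs_inv, abs_of_nonneg measureReal_nonneg]
  calc (μ.real s)⁻¹ * |∫ y in s, f y * g y ∂μ|
      ≤ (μ.real s)⁻¹ * (C * ∫ y in s, |f y| ∂μ) := by gcongr
    _ = C * ((μ.real s)⁻¹ * ∫ y in s, |f y| ∂μ) := by ring

section MetricMeasure

variable {X : Type*} [MetricSpace X] [MeasurableSpace X]

theorem lowerSemicontinuous_measure_ball (μ : Measure X) (r : ℝ) :
    LowerSemicontinuous fun y => μ (ball y r) := by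
  intro y a ha
  have hmono : Monotone fun n : ℕ => ball y (r - 1 / (n + 1)) := fun m n hmn =>
    ball_subset_ball (sub_le_sub_left (Nat.one_div_le_one_div hmn) r)
  have hunion : (⋃ n : ℕ, ball y (r - 1 / (n + 1))) = ball y r := by
    ext z
    simp only [mem_iUnion, mem_ball]
    constructor
    · rintro ⟨n, hn⟩
      linarith [Nat.one_div_pos_of_nat (α := ℝ) (n := n)]
    · intro hz
      obtain ⟨n, hn⟩ := exists_nat_one_div_lt (sub_pos.2 hz)
      exact ⟨n, by linarith⟩
  obtain ⟨n, hn⟩ := ((tendsto_measure_iUnion_atTop (μ := μ) hmono).eventually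
    (Ioi_mem_nhds (by rwa [hunion]))).exists
  filter_upwards [ball_mem_nhds y (Nat.one_div_pos_of_nat (n := n))] with y' hy'
  refine hn.trans_le (measure_mono (ball_subset_ball' ?_))
  rw [mem_ball'] at hy'
  linarith

theorem measurable_measure_ball [OpensMeasurableSpace X] (μ : Measure X) (r : ℝ) :
    Measurable fun y => μ (ball y r) :=
  (lowerSemicontinuous_measure_ball μ r).measurable

/-- The `r`-distortion `δ_r(x, y)`. -/
noncomputable def ballDistortion (μ : Measure X) (r : ℝ) (x y : X) : ℝ :=
  1 - (μ (ball x r)).toReal / (μ (ball y r)).toReal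

theorem measurable_ballDistortion [OpensMeasurableSpace X] (μ : Measure X) (r : ℝ) (x : X) :
    Measurable (ballDistortion μ r x) :=
  measurable_const.sub (measurable_const.div (measurable_measure_ball μ r).ennreal_toReal)

theorem amvOp_sub_samvOp {μ : Measure X} {u : X → ℝ} {c : ℝ} {x : X} {r : ℝ}
    (hu : IntegrableOn (fun y => u y - c) (ball x r) μ)
    (huδ : IntegrableOn (fun y => (u y - c) * ballDistortion μ r x y) (ball x r) μ) :
    amvOp μ u c x r - samvOp μ u c x r =
      1 / (2 * r ^ 2) * ⨍ y in ball x r, (u y - c) * ballDistortion μ r x y ∂μ := by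
  have hsamv : (∫ y in ball x r,
      (u y - c) * (1 + (μ (ball x r)).toReal / (μ (ball y r)).toReal) ∂μ) =
      2 * (∫ y in ball x r, (u y - c) ∂μ) -
        ∫ y in ball x r, (u y - c) * ballDistortion μ r x y ∂μ := by
    rw [← integral_const_mul, ← integral_sub (hu.const_mul 2) huδ]
    congr 1 with y
    simp only [ballDistortion]
    ring
  simp only [amvOp, samvOp, setAverage_eq, smul_eq_mul, hsamv]
  ring

theorem abs_amvOp_sub_samvOp_le [OpensMeasurableSpace X] {μ : Measure X} {u : X → ℝ} {c : ℝ}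
    {x : X} {r K : ℝ} (hr : r ≠ 0)
    (hu : IntegrableOn (fun y => u y - c) (ball x r) μ)
    (hδ : ∀ y ∈ ball x r, |ballDistortion μ r x y| ≤ K * r ^ 2) :
    |amvOp μ u c x r - samvOp μ u c x r| ≤ K / 2 * ⨍ y in ball x r, |u y - c| ∂μ := by
  have huδ : IntegrableOn (fun y => (u y - c) * ballDistortion μ r x y) (ball x r) μ := by
    simp_rw [mul_comm (u _ - c)]
    refine hu.bdd_mul (c := K * r ^ 2) (measurable_ballDistortion μ r x).aestronglyMeasurable ?_
    filter_upwards [ae_restrict_mem measurableSet_ball] with y hy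
    exact (Real.norm_eq_abs _).trans_le (hδ y hy)
  rw [amvOp_sub_samvOp hu huδ, abs_mul, abs_of_nonneg (by positivity)]
  calc 1 / (2 * r ^ 2) * |⨍ y in ball x r, (u y - c) * ballDistortion μ r x y ∂μ|
      ≤ 1 / (2 * r ^ 2) * (K * r ^ 2 * ⨍ y in ball x r, |u y - c| ∂μ) := by
        gcongr
        exact abs_setAverage_mul_le measurableSet_ball hu hδ
    _ = K / 2 * ⨍ y in ball x r, |u y - c| ∂μ := by
        field_simp

end MetricMeasure

/-- Let `(X,d,μ)` be a metric measure space, `u ∈ L¹_loc` and `x` a Lebesgue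
point of `u`.  If `ε_x(r) := sup_{y ∈ B_r(x)} |1 − μ(B_r(x))/μ(B_r(y))| = O(r²)` as `r ↓ 0`,
then `|Δ_{μ,r}u(x) − Δ̃_{μ,r}u(x)| → 0` as `r ↓ 0`; in particular `Δ_{μ,r}u(x)` converges iff
`Δ̃_{μ,r}u(x)` does, and the limits coincide. -/
theorem stmt_6 {X : Type*} [MetricSpace X] [MeasurableSpace X] [BorelSpace X]
    (μ : Measure X)
    (hμ : ∀ (x : X) (r : ℝ), 0 < r → 0 < μ (ball x r) ∧ μ (ball x r) < ∞)
    (u : X → ℝ) (hu : LocallyIntegrable u μ) (x : X) (c : ℝ)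
    (hleb : Tendsto (fun r => ⨍ y in ball x r, |u y - c| ∂μ) (𝓝[>] (0 : ℝ)) (𝓝 0))
    (hO : ∃ K r₁ : ℝ, 0 < K ∧ 0 < r₁ ∧ ∀ r : ℝ, 0 < r → r < r₁ → ∀ y ∈ ball x r,
      |1 - (μ (ball x r)).toReal / (μ (ball y r)).toReal| ≤ K * r ^ 2) :
    Tendsto (fun r => |amvOp μ u c x r - samvOp μ u c x r|) (𝓝[>] (0 : ℝ)) (𝓝 0) ∧
    ∀ L : ℝ,
      Tendsto (fun r => amvOp μ u c x r) (𝓝[>] (0 : ℝ)) (𝓝 L) ↔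
      Tendsto (fun r => samvOp μ u c x r) (𝓝[>] (0 : ℝ)) (𝓝 L) := by
  obtain ⟨K, r₁, -, hr₁, hδ⟩ := hO
  have hu_ball : ∀ᶠ r in 𝓝[>] (0 : ℝ), IntegrableOn u (ball x r) μ :=
    (((tendsto_closedBall_smallSets x).mono_left nhdsWithin_le_nhds).eventually
      (hu x).eventually).mono fun r h => h.mono_set ball_subset_closedBall
  have hdiff : Tendsto (fun r => |amvOp μ u c x r - samvOp μ u c x r|) (𝓝[>] (0 : ℝ)) (𝓝 0) := by
    refine squeeze_zero' (.of_forall fun r => abs_nonneg _) ?_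
      (by simpa using hleb.const_mul (K / 2))
    filter_upwards [self_mem_nhdsWithin, Ioo_mem_nhdsGT hr₁, hu_ball] with r hr hrr₁ hur
    exact abs_amvOp_sub_samvOp_le (ne_of_gt hr)
      (hur.sub (integrableOn_const (hμ x r hr).2.ne)) (hδ r hr hrr₁.2)
  exact ⟨hdiff, fun L => tendsto_iff_of_dist hdiff⟩
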